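/- Let ρ be a symmetric DSO state on ℂ^d⊗ℂ^d, i.e. a density matrix with V ρ V = ρ (V the swap operator) that admits a positive semidefinite source-operator. Let γ_{nm} (n,m = 1,2) be real numbers with |γ_{nm}| ≤ 1 such that γ₁₁γ₁₂ = −γ₂₁γ₂₂ or γ₁₁γ₂₁ = −γ₁₂γ₂₂. Then |Σ_{n,m} γ_{nm} tr[ρ(A_n⊗B_m)]| ≤ 2 for all Hermitian matrices A₁, A₂, B₁, B₂ on ℂ^d with operator norms at most 1. -/

import Mathlib

/-!
A positive source operator `T` of type `T₁₂₂` reproduces `ρ` on two different pairs of tensor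
factors, so `tr[ρ (A ⊗ B₁)] = tr[T (A ⊗ B₁ ⊗ 1)]` and `tr[ρ (A ⊗ B₂)] = tr[T (A ⊗ 1 ⊗ B₂)]`: seen
through `T`, the observables `B₁` and `B₂` act on different factors and hence commute. In a joint
eigenbasis, with eigenvalues `x, y ∈ [-1, 1]`, the Bell expression splits over the diagonal blocks
`T_{xy} ≥ 0` into the terms `tr[T_{xy} ((γ₁₁ x + γ₁₂ y) A₁ + (γ₂₁ x + γ₂₂ y) A₂)]`, each bounded by
`(|γ₁₁ x + γ₁₂ y| + |γ₂₁ x + γ₂₂ y|) tr T_{xy} ≤ 2 tr T_{xy}`; this scalar bound is where the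
condition on the `γ`s enters. A source of type `T₁₁₂` is one of type `T₁₂₂` for the state with
the two parties exchanged, which exchanges the roles of the `A`s and `B`s and of `γ₁₂` and `γ₂₁`.
-/

open Matrix
open scoped Kronecker ComplexOrder

namespace BellPaper

variable {α β γ : Type*} [Fintype α] [Fintype β] [Fintype γ]

/-- Partial trace over the first factor of a threefold tensor product. -/
noncomputable def ptr1 (T : Matrix ((α × β) × γ) ((α × β) × γ) ℂ) :
    Matrix (β × γ) (β × γ) ℂ :=
  fun p q => ∑ i : α, T ((i, p.1), p.2) ((i, q.1), q.2)

/-- Partial trace over the second factor of a threefold tensor product. -/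
noncomputable def ptr2 (T : Matrix ((α × β) × γ) ((α × β) × γ) ℂ) :
    Matrix (α × γ) (α × γ) ℂ :=
  fun p q => ∑ j : β, T ((p.1, j), p.2) ((q.1, j), q.2)

/-- Partial trace over the third factor of a threefold tensor product. -/
noncomputable def ptr3 (T : Matrix ((α × β) × γ) ((α × β) × γ) ℂ) :
    Matrix (α × β) (α × β) ℂ :=
  fun p q => ∑ k : γ, T (p, k) (q, k)

/-- Partial trace over the second factor of a twofold tensor product. -/
noncomputable def ptrB (M : Matrix (α × β) (α × β) ℂ) : Matrix α α ℂ :=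
  fun i i' => ∑ j : β, M (i, j) (i', j)

/-- A density matrix: positive semidefinite with unit trace. -/
def IsDensityMatrix {n : Type*} [Fintype n] (ρ : Matrix n n ℂ) : Prop :=
  ρ.PosSemidef ∧ ρ.trace = 1

/-- Source-operator of type `T₁₂₂` for a state on ℂ^{d₁}⊗ℂ^{d₂}. -/
def IsSource122 {d₁ d₂ : ℕ} (ρ : Matrix (Fin d₁ × Fin d₂) (Fin d₁ × Fin d₂) ℂ)
    (T : Matrix ((Fin d₁ × Fin d₂) × Fin d₂) ((Fin d₁ × Fin d₂) × Fin d₂) ℂ) : Prop :=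
  T.IsHermitian ∧ ptr2 T = ρ ∧ ptr3 T = ρ

/-- Source-operator of type `T₁₁₂` for a state on ℂ^{d₁}⊗ℂ^{d₂}. -/
def IsSource112 {d₁ d₂ : ℕ} (ρ : Matrix (Fin d₁ × Fin d₂) (Fin d₁ × Fin d₂) ℂ)
    (S : Matrix ((Fin d₁ × Fin d₁) × Fin d₂) ((Fin d₁ × Fin d₁) × Fin d₂) ℂ) : Prop :=
  S.IsHermitian ∧ ptr1 S = ρ ∧ ptr2 S = ρ

/-- A DSO state: a density matrix admitting a positive semidefinite source-operator. -/
def IsDSO {d₁ d₂ : ℕ} (ρ : Matrix (Fin d₁ × Fin d₂) (Fin d₁ × Fin d₂) ℂ) : Prop :=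
  IsDensityMatrix ρ ∧
    ((∃ T, T.PosSemidef ∧ IsSource122 ρ T) ∨ (∃ S, S.PosSemidef ∧ IsSource112 ρ S))

/-- A Bell class state: a density matrix admitting a density source-operator with the
special dilation property (all three partial traces equal the state). -/
def IsBellClass {d : ℕ} (ρ : Matrix (Fin d × Fin d) (Fin d × Fin d) ℂ) : Prop :=
  IsDensityMatrix ρ ∧
    ∃ T : Matrix ((Fin d × Fin d) × Fin d) ((Fin d × Fin d) × Fin d) ℂ,
      T.PosSemidef ∧ ptr1 T = ρ ∧ ptr2 T = ρ ∧ ptr3 T = ρ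

/-- The operator (spectral) norm of a matrix acting on a Euclidean space. -/
noncomputable def opNorm {n : Type*} [Fintype n] [DecidableEq n] (W : Matrix n n ℂ) : ℝ :=
  ‖Matrix.toEuclideanCLM (𝕜 := ℂ) W‖

/-- The swap (permutation) operator `V_d` on ℂ^d ⊗ ℂ^d. -/
noncomputable def swapMat (d : ℕ) : Matrix (Fin d × Fin d) (Fin d × Fin d) ℂ :=
  fun p q => if p.1 = q.2 ∧ p.2 = q.1 then 1 else 0

/-- The Werner state on ℂ^d ⊗ ℂ^d. -/
noncomputable def werner (d : ℕ) : Matrix (Fin d × Fin d) (Fin d × Fin d) ℂ :=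
  (((d : ℂ) + 1) / (d : ℂ) ^ 3) • (1 : Matrix (Fin d × Fin d) (Fin d × Fin d) ℂ)
    - ((d : ℂ) ^ 2)⁻¹ • swapMat d

/-- The triple of indices of a point of the threefold product. -/
def triple {d : ℕ} (p : (Fin d × Fin d) × Fin d) : Fin 3 → Fin d := ![p.1.1, p.1.2, p.2]

/-- The unitary permuting the three tensor factors of ℂ^d ⊗ ℂ^d ⊗ ℂ^d according to π. -/
noncomputable def permMat (d : ℕ) (π : Equiv.Perm (Fin 3)) :
    Matrix ((Fin d × Fin d) × Fin d) ((Fin d × Fin d) × Fin d) ℂ :=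
  fun p q => if ∀ i, triple p (π i) = triple q i then 1 else 0

/-- The antisymmetrization projection `Q_d^{(-)}` on ℂ^d ⊗ ℂ^d ⊗ ℂ^d. -/
noncomputable def antisym (d : ℕ) :
    Matrix ((Fin d × Fin d) × Fin d) ((Fin d × Fin d) × Fin d) ℂ :=
  (6 : ℂ)⁻¹ • ∑ π : Equiv.Perm (Fin 3), (((Equiv.Perm.sign π : ℤ) : ℂ)) • permMat d π

/-- Tensor product of two vectors. -/
def tens {m n : Type*} (u : m → ℂ) (v : n → ℂ) : m × n → ℂ := fun p => u p.1 * v p.2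

/-- The rank-one operator |v⟩⟨v|. -/
noncomputable def outer {n : Type*} (v : n → ℂ) : Matrix n n ℂ :=
  Matrix.vecMulVec v (star v)

theorem abs_add_le_one_add_mul {a b : ℝ} (ha : |a| ≤ 1) (hb : |b| ≤ 1) : |a + b| ≤ 1 + a * b := by
  rw [abs_le] at *
  constructor <;> nlinarith

theorem abs_add_abs_le_of_abs_add_le_of_abs_sub_le {u v c : ℝ} (hs : |u + v| ≤ c)
    (hd : |u - v| ≤ c) : |u| + |v| ≤ c := by
  rw [abs_le] at hs hd
  rcases abs_cases u with ⟨hu, -⟩ | ⟨hu, -⟩ <;> rcases abs_cases v with ⟨hv, -⟩ | ⟨hv, -⟩ <;>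
    linarith

theorem abs_add_abs_le_two {g₁₁ g₁₂ g₂₁ g₂₂ x y : ℝ}
    (h₁₁ : |g₁₁| ≤ 1) (h₁₂ : |g₁₂| ≤ 1) (h₂₁ : |g₂₁| ≤ 1) (h₂₂ : |g₂₂| ≤ 1)
    (hx : |x| ≤ 1) (hy : |y| ≤ 1)
    (hg : g₁₁ * g₁₂ = -(g₂₁ * g₂₂) ∨ g₁₁ * g₂₁ = -(g₁₂ * g₂₂)) :
    |g₁₁ * x + g₁₂ * y| + |g₂₁ * x + g₂₂ * y| ≤ 2 := by
  have hmul : ∀ {g z : ℝ}, |g| ≤ 1 → |z| ≤ 1 → |g * z| ≤ 1 := fun hg hz => by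
    rw [abs_mul]; exact mul_le_one₀ hg (abs_nonneg _) hz
  have hlin : ∀ a b : ℝ, |a * x + b * y| ≤ |a| + |b| := fun a b => by
    calc |a * x + b * y| ≤ |a * x| + |b * y| := abs_add_le _ _
      _ ≤ |a| + |b| := by
        rw [abs_mul, abs_mul]
        gcongr <;> exact mul_le_of_le_one_right (abs_nonneg _) ‹_›
  rcases hg with hg | hg
  · have h₁ := abs_add_le_one_add_mul (hmul h₁₁ hx) (hmul h₁₂ hy)
    have h₂ := abs_add_le_one_add_mul (hmul h₂₁ hx) (hmul h₂₂ hy)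
    linear_combination h₁ + h₂ + x * y * hg
  · apply abs_add_abs_le_of_abs_add_le_of_abs_sub_le
    · have h₁ := abs_add_le_one_add_mul h₁₁ h₂₁
      have h₂ := abs_add_le_one_add_mul h₁₂ h₂₂
      calc _ = |(g₁₁ + g₂₁) * x + (g₁₂ + g₂₂) * y| := by ring_nf
        _ ≤ 2 := by linear_combination hlin (g₁₁ + g₂₁) (g₁₂ + g₂₂) + h₁ + h₂ + hg
    · have h₁ := abs_add_le_one_add_mul h₁₁ ((abs_neg g₂₁).trans_le h₂₁)
      have h₂ := abs_add_le_one_add_mul h₁₂ ((abs_neg g₂₂).trans_le h₂₂)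
      calc _ = |(g₁₁ + -g₂₁) * x + (g₁₂ + -g₂₂) * y| := by ring_nf
        _ ≤ 2 := by linear_combination hlin (g₁₁ + -g₂₁) (g₁₂ + -g₂₂) + h₁ + h₂ - hg

section OpNorm

variable {n : Type*} [Fintype n]

theorem norm_star_dotProduct_mulVec_le [DecidableEq n] (M : Matrix n n ℂ) (x : n → ℂ) :
    ‖star x ⬝ᵥ (M *ᵥ x)‖ ≤ opNorm M * (star x ⬝ᵥ x).re := by
  set x' : EuclideanSpace ℂ n := WithLp.toLp 2 x
  have hquad : star x ⬝ᵥ (M *ᵥ x) = inner ℂ x' (toEuclideanCLM (𝕜 := ℂ) M x') := by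
    rw [toEuclideanCLM_toLp, EuclideanSpace.inner_toLp_toLp, dotProduct_comm]
  have hnorm : (star x ⬝ᵥ x).re = ‖x'‖ ^ 2 := by
    rw [← inner_self_eq_norm_sq (𝕜 := ℂ), EuclideanSpace.inner_toLp_toLp, dotProduct_comm]
    rfl
  rw [hquad, hnorm, opNorm]
  calc _ ≤ ‖x'‖ * ‖toEuclideanCLM (𝕜 := ℂ) M x'‖ := norm_inner_le_norm _ _
    _ ≤ ‖x'‖ * (‖toEuclideanCLM (𝕜 := ℂ) M‖ * ‖x'‖) := by
      gcongr; exact ContinuousLinearMap.le_opNorm _ _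
    _ = _ := by ring

theorem _root_.Matrix.IsHermitian.abs_eigenvalues_le_opNorm [DecidableEq n] {A : Matrix n n ℂ}
    (hA : A.IsHermitian) (i : n) : |hA.eigenvalues i| ≤ opNorm A := by
  have hv : toEuclideanCLM (𝕜 := ℂ) A (hA.eigenvectorBasis i)
      = hA.eigenvalues i • hA.eigenvectorBasis i :=
    WithLp.ofLp_injective _ <| by rw [ofLp_toEuclideanCLM, hA.mulVec_eigenvectorBasis]; rfl
  have := (toEuclideanCLM (𝕜 := ℂ) A).le_opNorm (hA.eigenvectorBasis i)
  rwa [hv, norm_smul, hA.eigenvectorBasis.orthonormal.1 i, mul_one, mul_one,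
    Real.norm_eq_abs] at this

theorem trace_vecMulVec_star_mul (v : n → ℂ) (M : Matrix n n ℂ) :
    (vecMulVec v (star v) * M).trace = star v ⬝ᵥ (M *ᵥ v) := by
  rw [vecMulVec_mul, trace_vecMulVec, dotProduct_comm, dotProduct_mulVec]

theorem _root_.Matrix.PosSemidef.norm_trace_mul_le [DecidableEq n] {R : Matrix n n ℂ}
    (hR : R.PosSemidef) (M : Matrix n n ℂ) : ‖(R * M).trace‖ ≤ opNorm M * R.trace.re := by
  obtain ⟨m, v, rfl⟩ := posSemidef_iff_eq_sum_vecMulVec.mp hR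
  have htrace : ∀ M : Matrix n n ℂ, ((∑ i, vecMulVec (v i) (star (v i))) * M).trace
      = ∑ i, star (v i) ⬝ᵥ (M *ᵥ v i) := fun M => by
    simp only [Finset.sum_mul, trace_sum, trace_vecMulVec_star_mul]
  calc _ ≤ ∑ i, ‖star (v i) ⬝ᵥ (M *ᵥ v i)‖ := htrace M ▸ norm_sum_le _ _
    _ ≤ ∑ i, opNorm M * (star (v i) ⬝ᵥ v i).re :=
      Finset.sum_le_sum fun i _ => norm_star_dotProduct_mulVec_le M (v i)
    _ = _ := by
      rw [← Finset.mul_sum, ← Complex.re_sum, ← Matrix.mul_one (∑ i, _), htrace]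
      simp only [one_mulVec]

end OpNorm

theorem trace_ptr3_mul [DecidableEq γ] (T : Matrix ((α × β) × γ) ((α × β) × γ) ℂ)
    (M : Matrix (α × β) (α × β) ℂ) :
    (ptr3 T * M).trace = (T * (M ⊗ₖ (1 : Matrix γ γ ℂ))).trace := by
  simp only [trace, diag, mul_apply, ptr3, kroneckerMap_apply, one_apply,
    Fintype.sum_prod_type (α₁ := α × β) (α₂ := γ), mul_ite, mul_one, mul_zero,
    Finset.sum_ite_eq', Finset.mem_univ, if_true, Finset.sum_mul]
  exact Finset.sum_congr rfl fun _ _ => Finset.sum_comm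

theorem trace_ptr2_mul_kronecker [DecidableEq β] (T : Matrix ((α × β) × γ) ((α × β) × γ) ℂ)
    (A : Matrix α α ℂ) (B : Matrix γ γ ℂ) :
    (ptr2 T * (A ⊗ₖ B)).trace = (T * ((A ⊗ₖ (1 : Matrix β β ℂ)) ⊗ₖ B)).trace := by
  simp only [trace, diag, mul_apply, ptr2, kroneckerMap_apply, one_apply,
    Fintype.sum_prod_type (α₁ := α × β) (α₂ := γ), Fintype.sum_prod_type (α₁ := α) (α₂ := β),
    Fintype.sum_prod_type (α₁ := α) (α₂ := γ), mul_ite, ite_mul, mul_one, mul_zero, zero_mul,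
    Finset.sum_ite_irrel, Finset.sum_const_zero, Finset.sum_ite_eq', Finset.mem_univ, if_true,
    Finset.sum_mul]
  simp only [Finset.sum_comm (γ := β) (α := γ), Finset.sum_comm (γ := β) (α := α)]

section Blocks

variable {ι κ m n : Type*} [Fintype ι] [Fintype κ] [Fintype m] [Fintype n]

theorem trace_submatrix_equiv (M : Matrix n n ℂ) (e : m ≃ n) :
    (M.submatrix e e).trace = M.trace :=
  e.sum_comp fun i => M i i

theorem trace_submatrix_mul_submatrix (M N : Matrix n n ℂ) (e : m ≃ n) :
    (M.submatrix e e * N.submatrix e e).trace = (M * N).trace := by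
  rw [submatrix_mul_equiv, trace_submatrix_equiv]

theorem trace_mul_kronecker_diagonal [DecidableEq κ] (R : Matrix (ι × κ) (ι × κ) ℂ)
    (A : Matrix ι ι ℂ) (c : κ → ℂ) :
    (R * (A ⊗ₖ diagonal c)).trace
      = ∑ k, c k * (R.submatrix (·, k) (·, k) * A).trace := by
  simp only [trace, diag, mul_apply, kroneckerMap_apply, diagonal_apply, submatrix_apply,
    Fintype.sum_prod_type, mul_ite, mul_zero, Finset.sum_ite_eq', Finset.mem_univ, if_true,
    Finset.mul_sum]
  rw [Finset.sum_comm]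
  exact Finset.sum_congr rfl fun _ _ => Finset.sum_congr rfl fun _ _ =>
    Finset.sum_congr rfl fun _ _ => by ring

theorem mul_mul_star_kronecker_mul_mul_star (U₁ X : Matrix ι ι ℂ) (U₂ Y : Matrix κ κ ℂ) :
    (U₁ * X * star U₁) ⊗ₖ (U₂ * Y * star U₂) = (U₁ ⊗ₖ U₂) * (X ⊗ₖ Y) * star (U₁ ⊗ₖ U₂) := by
  simp only [star_eq_conjTranspose, conjTranspose_kronecker, mul_kronecker_mul]

theorem sum_trace_submatrix_eq_trace [DecidableEq κ] (R : Matrix (ι × κ) (ι × κ) ℂ) :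
    ∑ k, (R.submatrix (·, k) (·, k)).trace = R.trace := by
  classical
  simpa using (trace_mul_kronecker_diagonal R 1 1).symm

end Blocks

section Bound

variable {ι κ : Type*} [Fintype ι] [DecidableEq ι] [Fintype κ] [DecidableEq κ]

theorem _root_.Matrix.PosSemidef.norm_trace_mul_kronecker_diagonal_add_le
    {R : Matrix (ι × κ) (ι × κ) ℂ} (hR : R.PosSemidef) {A₁ A₂ : Matrix ι ι ℂ}
    (h₁ : opNorm A₁ ≤ 1) (h₂ : opNorm A₂ ≤ 1)
    {c e : κ → ℂ} (hce : ∀ k, ‖c k‖ + ‖e k‖ ≤ 2) :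
    ‖(R * (A₁ ⊗ₖ diagonal c + A₂ ⊗ₖ diagonal e)).trace‖ ≤ 2 * R.trace.re := by
  set Rₖ := fun k => R.submatrix (·, k) (·, k)
  have hRₖ : ∀ k, (Rₖ k).PosSemidef := fun k => hR.submatrix _
  have hnorm : ∀ k {A : Matrix ι ι ℂ}, opNorm A ≤ 1 → ‖(Rₖ k * A).trace‖ ≤ (Rₖ k).trace.re :=
    fun k A hA => ((hRₖ k).norm_trace_mul_le A).trans <|
      mul_le_of_le_one_left (Complex.nonneg_iff.mp (hRₖ k).trace_nonneg).1 hA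
  rw [mul_add, trace_add, trace_mul_kronecker_diagonal, trace_mul_kronecker_diagonal,
    ← Finset.sum_add_distrib, ← sum_trace_submatrix_eq_trace, Complex.re_sum, Finset.mul_sum]
  refine (norm_sum_le _ _).trans (Finset.sum_le_sum fun k _ => ?_)
  calc _ ≤ ‖c k‖ * ‖(Rₖ k * A₁).trace‖ + ‖e k‖ * ‖(Rₖ k * A₂).trace‖ := by
        rw [← norm_mul, ← norm_mul]; exact norm_add_le _ _
    _ ≤ (‖c k‖ + ‖e k‖) * (Rₖ k).trace.re := by
        rw [add_mul]; gcongr <;> exact hnorm k ‹_›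
    _ ≤ 2 * (Rₖ k).trace.re :=
        mul_le_mul_of_nonneg_right (hce k) (Complex.nonneg_iff.mp (hRₖ k).trace_nonneg).1

theorem _root_.Matrix.PosSemidef.norm_trace_mul_kronecker_conj_add_le
    {R : Matrix (ι × κ) (ι × κ) ℂ} (hR : R.PosSemidef) {A₁ A₂ : Matrix ι ι ℂ}
    (h₁ : opNorm A₁ ≤ 1) (h₂ : opNorm A₂ ≤ 1)
    {U : Matrix κ κ ℂ} (hU : U ∈ unitary (Matrix κ κ ℂ)) {c e : κ → ℂ}
    (hce : ∀ k, ‖c k‖ + ‖e k‖ ≤ 2) :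
    ‖(R * (A₁ ⊗ₖ (U * diagonal c * star U) + A₂ ⊗ₖ (U * diagonal e * star U))).trace‖
      ≤ 2 * R.trace.re := by
  have hW : (1 ⊗ₖ U : Matrix (ι × κ) (ι × κ) ℂ) ∈ unitary _ := kronecker_mem_unitary (one_mem _) hU
  have hconj : ∀ (A : Matrix ι ι ℂ) (D : Matrix κ κ ℂ),
      A ⊗ₖ (U * D * star U) = (1 ⊗ₖ U) * (A ⊗ₖ D) * star (1 ⊗ₖ U) := fun A D => by
    simpa using mul_mul_star_kronecker_mul_mul_star 1 A U D
  set W : Matrix (ι × κ) (ι × κ) ℂ := 1 ⊗ₖ U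
  have hcycle : ∀ Z, (R * (W * Z * star W)).trace = (star W * R * W * Z).trace := fun Z => by
    simp only [Matrix.mul_assoc]; rw [trace_mul_comm (star W)]; simp only [Matrix.mul_assoc]
  have htrace : (star W * R * W).trace = R.trace := by
    rw [trace_mul_cycle, Unitary.mul_star_self_of_mem hW, one_mul]
  rw [hconj, hconj, ← add_mul, ← mul_add, hcycle, ← htrace]
  exact (hR.conjTranspose_mul_mul_same W).norm_trace_mul_kronecker_diagonal_add_le h₁ h₂ hce

end Bound

section Diagonalization

variable {ι κ : Type*} [Fintype ι] [DecidableEq ι] [Fintype κ] [DecidableEq κ]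

theorem _root_.Matrix.IsHermitian.eq_eigenvectorUnitary_mul_diagonal_mul_star
    {B : Matrix ι ι ℂ} (hB : B.IsHermitian) :
    B = hB.eigenvectorUnitary * diagonal (fun i => (hB.eigenvalues i : ℂ))
      * star (hB.eigenvectorUnitary : Matrix ι ι ℂ) :=
  hB.spectral_theorem

theorem _root_.Matrix.IsHermitian.smul_kronecker_one_add_smul_one_kronecker
    {B₁ : Matrix ι ι ℂ} {B₂ : Matrix κ κ ℂ} (hB₁ : B₁.IsHermitian) (hB₂ : B₂.IsHermitian)
    (a b : ℂ) :
    a • (B₁ ⊗ₖ 1) + b • (1 ⊗ₖ B₂)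
      = ((hB₁.eigenvectorUnitary : Matrix ι ι ℂ) ⊗ₖ (hB₂.eigenvectorUnitary : Matrix κ κ ℂ))
        * diagonal (fun p => a * hB₁.eigenvalues p.1 + b * hB₂.eigenvalues p.2)
        * star ((hB₁.eigenvectorUnitary : Matrix ι ι ℂ)
          ⊗ₖ (hB₂.eigenvectorUnitary : Matrix κ κ ℂ)) := by
  set U₁ := hB₁.eigenvectorUnitary
  set U₂ := hB₂.eigenvectorUnitary
  set U := (U₁ : Matrix ι ι ℂ) ⊗ₖ (U₂ : Matrix κ κ ℂ)
  set D₁ := diagonal fun i => (hB₁.eigenvalues i : ℂ)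
  set D₂ := diagonal fun i => (hB₂.eigenvalues i : ℂ)
  have h₁ : B₁ ⊗ₖ (1 : Matrix κ κ ℂ) = U * (D₁ ⊗ₖ 1) * star U := by
    rw [← mul_mul_star_kronecker_mul_mul_star, mul_one, Unitary.mul_star_self_of_mem U₂.2,
      ← hB₁.eq_eigenvectorUnitary_mul_diagonal_mul_star]
  have h₂ : (1 : Matrix ι ι ℂ) ⊗ₖ B₂ = U * (1 ⊗ₖ D₂) * star U := by
    rw [← mul_mul_star_kronecker_mul_mul_star, mul_one, Unitary.mul_star_self_of_mem U₁.2,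
      ← hB₂.eq_eigenvectorUnitary_mul_diagonal_mul_star]
  have hD : diagonal (fun p : ι × κ => a * hB₁.eigenvalues p.1 + b * hB₂.eigenvalues p.2)
      = a • (D₁ ⊗ₖ 1) + b • (1 ⊗ₖ D₂) := by
    rw [← diagonal_one, diagonal_kronecker_diagonal, ← diagonal_one, diagonal_kronecker_diagonal,
      ← diagonal_smul, ← diagonal_smul, diagonal_add]
    simp
  rw [h₁, h₂, hD]
  simp only [Matrix.mul_add, Matrix.add_mul, Matrix.mul_smul, Matrix.smul_mul]

end Diagonalization

noncomputable def chshValue (ρ : Matrix (α × β) (α × β) ℂ) (γ₁₁ γ₁₂ γ₂₁ γ₂₂ : ℝ)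
    (A₁ A₂ : Matrix α α ℂ) (B₁ B₂ : Matrix β β ℂ) : ℂ :=
  (γ₁₁ : ℂ) * (ρ * (A₁ ⊗ₖ B₁)).trace + (γ₁₂ : ℂ) * (ρ * (A₁ ⊗ₖ B₂)).trace
    + (γ₂₁ : ℂ) * (ρ * (A₂ ⊗ₖ B₁)).trace + (γ₂₂ : ℂ) * (ρ * (A₂ ⊗ₖ B₂)).trace

theorem chshValue_submatrix_swap (ρ : Matrix (α × β) (α × β) ℂ) (γ₁₁ γ₁₂ γ₂₁ γ₂₂ : ℝ)
    (A₁ A₂ : Matrix α α ℂ) (B₁ B₂ : Matrix β β ℂ) :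
    chshValue (ρ.submatrix Prod.swap Prod.swap) γ₁₁ γ₂₁ γ₁₂ γ₂₂ B₁ B₂ A₁ A₂
      = chshValue ρ γ₁₁ γ₁₂ γ₂₁ γ₂₂ A₁ A₂ B₁ B₂ := by
  have hswap : ∀ (A : Matrix α α ℂ) (B : Matrix β β ℂ),
      (ρ.submatrix Prod.swap Prod.swap * (B ⊗ₖ A)).trace = (ρ * (A ⊗ₖ B)).trace := fun A B => by
    rw [← trace_submatrix_mul_submatrix ρ (A ⊗ₖ B) (Equiv.prodComm β α)]
    congr 2
    ext
    simp [mul_comm]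
  simp only [chshValue, hswap]
  ring

theorem chshValue_eq_trace_of_ptr2_ptr3 [DecidableEq β] {ρ : Matrix (α × β) (α × β) ℂ}
    {T : Matrix ((α × β) × β) ((α × β) × β) ℂ} (h₂ : ptr2 T = ρ) (h₃ : ptr3 T = ρ)
    (γ₁₁ γ₁₂ γ₂₁ γ₂₂ : ℝ) (A₁ A₂ : Matrix α α ℂ) (B₁ B₂ : Matrix β β ℂ) :
    chshValue ρ γ₁₁ γ₁₂ γ₂₁ γ₂₂ A₁ A₂ B₁ B₂
      = (T.submatrix (Equiv.prodAssoc α β β).symm (Equiv.prodAssoc α β β).symm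
          * (A₁ ⊗ₖ ((γ₁₁ : ℂ) • (B₁ ⊗ₖ 1) + (γ₁₂ : ℂ) • (1 ⊗ₖ B₂))
            + A₂ ⊗ₖ ((γ₂₁ : ℂ) • (B₁ ⊗ₖ 1) + (γ₂₂ : ℂ) • (1 ⊗ₖ B₂)))).trace := by
  have h₃' : ∀ (A : Matrix α α ℂ) (B : Matrix β β ℂ), (ρ * (A ⊗ₖ B)).trace
      = (T.submatrix (Equiv.prodAssoc α β β).symm (Equiv.prodAssoc α β β).symm
          * (A ⊗ₖ (B ⊗ₖ 1))).trace := fun A B => by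
    rw [← h₃, trace_ptr3_mul, ← trace_submatrix_mul_submatrix _ _ (Equiv.prodAssoc α β β).symm,
      kronecker_assoc']
  have h₂' : ∀ (A : Matrix α α ℂ) (B : Matrix β β ℂ), (ρ * (A ⊗ₖ B)).trace
      = (T.submatrix (Equiv.prodAssoc α β β).symm (Equiv.prodAssoc α β β).symm
          * (A ⊗ₖ (1 ⊗ₖ B))).trace := fun A B => by
    rw [← h₂, trace_ptr2_mul_kronecker,
      ← trace_submatrix_mul_submatrix _ _ (Equiv.prodAssoc α β β).symm, kronecker_assoc']
  simp only [chshValue, kronecker_add, kronecker_smul, Matrix.mul_add, Matrix.mul_smul, trace_add,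
    trace_smul, smul_eq_mul]
  rw [h₃' A₁ B₁, h₂' A₁ B₂, h₃' A₂ B₁, h₂' A₂ B₂]
  ring

theorem norm_chshValue_le_two_of_ptr2_ptr3 [DecidableEq α] [DecidableEq β]
    {ρ : Matrix (α × β) (α × β) ℂ} {T : Matrix ((α × β) × β) ((α × β) × β) ℂ}
    (hT : T.PosSemidef) (h₂ : ptr2 T = ρ) (h₃ : ptr3 T = ρ) (hρ : ρ.trace = 1)
    {γ₁₁ γ₁₂ γ₂₁ γ₂₂ : ℝ} (hγ₁₁ : |γ₁₁| ≤ 1) (hγ₁₂ : |γ₁₂| ≤ 1) (hγ₂₁ : |γ₂₁| ≤ 1)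
    (hγ₂₂ : |γ₂₂| ≤ 1) (hγ : γ₁₁ * γ₁₂ = -(γ₂₁ * γ₂₂) ∨ γ₁₁ * γ₂₁ = -(γ₁₂ * γ₂₂))
    {A₁ A₂ : Matrix α α ℂ} {B₁ B₂ : Matrix β β ℂ} (hB₁ : B₁.IsHermitian) (hB₂ : B₂.IsHermitian)
    (hnA₁ : opNorm A₁ ≤ 1) (hnA₂ : opNorm A₂ ≤ 1) (hnB₁ : opNorm B₁ ≤ 1) (hnB₂ : opNorm B₂ ≤ 1) :
    ‖chshValue ρ γ₁₁ γ₁₂ γ₂₁ γ₂₂ A₁ A₂ B₁ B₂‖ ≤ 2 := by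
  set T₀ := T.submatrix (Equiv.prodAssoc α β β).symm (Equiv.prodAssoc α β β).symm
  have htrace : T₀.trace = 1 := by
    rw [trace_submatrix_equiv, ← hρ, ← h₃, ← Matrix.mul_one (ptr3 T), trace_ptr3_mul,
      one_kronecker_one, Matrix.mul_one]
  rw [chshValue_eq_trace_of_ptr2_ptr3 h₂ h₃, hB₁.smul_kronecker_one_add_smul_one_kronecker hB₂,
    hB₁.smul_kronecker_one_add_smul_one_kronecker hB₂]
  refine ((hT.submatrix _).norm_trace_mul_kronecker_conj_add_le hnA₁ hnA₂
    (kronecker_mem_unitary hB₁.eigenvectorUnitary.2 hB₂.eigenvectorUnitary.2)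
    fun p => ?_).trans (by rw [htrace]; norm_num)
  have hx := (hB₁.abs_eigenvalues_le_opNorm p.1).trans hnB₁
  have hy := (hB₂.abs_eigenvalues_le_opNorm p.2).trans hnB₂
  simpa only [← Complex.ofReal_mul, ← Complex.ofReal_add, Complex.norm_real, Real.norm_eq_abs]
    using abs_add_abs_le_two hγ₁₁ hγ₁₂ hγ₂₁ hγ₂₂ hx hy hγ

theorem norm_chshValue_le_two_of_ptr1_ptr2 [DecidableEq α] [DecidableEq β]
    {ρ : Matrix (α × β) (α × β) ℂ} {S : Matrix ((α × α) × β) ((α × α) × β) ℂ}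
    (hS : S.PosSemidef) (h₁ : ptr1 S = ρ) (h₂ : ptr2 S = ρ) (hρ : ρ.trace = 1)
    {γ₁₁ γ₁₂ γ₂₁ γ₂₂ : ℝ} (hγ₁₁ : |γ₁₁| ≤ 1) (hγ₁₂ : |γ₁₂| ≤ 1) (hγ₂₁ : |γ₂₁| ≤ 1)
    (hγ₂₂ : |γ₂₂| ≤ 1) (hγ : γ₁₁ * γ₁₂ = -(γ₂₁ * γ₂₂) ∨ γ₁₁ * γ₂₁ = -(γ₁₂ * γ₂₂))
    {A₁ A₂ : Matrix α α ℂ} {B₁ B₂ : Matrix β β ℂ} (hA₁ : A₁.IsHermitian) (hA₂ : A₂.IsHermitian)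
    (hnA₁ : opNorm A₁ ≤ 1) (hnA₂ : opNorm A₂ ≤ 1) (hnB₁ : opNorm B₁ ≤ 1) (hnB₂ : opNorm B₂ ≤ 1) :
    ‖chshValue ρ γ₁₁ γ₁₂ γ₂₁ γ₂₂ A₁ A₂ B₁ B₂‖ ≤ 2 := by
  -- Moving the `β` factor of `S` to the front gives a `T₁₂₂` source of the swapped state.
  set f : (β × α) × α → (α × α) × β := fun x => ((x.1.2, x.2), x.1.1)
  rw [← chshValue_submatrix_swap]
  exact norm_chshValue_le_two_of_ptr2_ptr3 (hS.submatrix f) (by rw [← h₁]; rfl)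
    (by rw [← h₂]; rfl) ((trace_submatrix_equiv ρ (Equiv.prodComm β α)).trans hρ)
    hγ₁₁ hγ₂₁ hγ₁₂ hγ₂₂ hγ.symm
    hA₁ hA₂ hnB₁ hnB₂ hnA₁ hnA₂

theorem symmetric_dso_extended_chsh_general {d : ℕ}
    (ρ : Matrix (Fin d × Fin d) (Fin d × Fin d) ℂ) (hρ : IsDSO ρ)
    (γ₁₁ γ₁₂ γ₂₁ γ₂₂ : ℝ)
    (hγ₁₁ : |γ₁₁| ≤ 1) (hγ₁₂ : |γ₁₂| ≤ 1) (hγ₂₁ : |γ₂₁| ≤ 1) (hγ₂₂ : |γ₂₂| ≤ 1)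
    (hγ : γ₁₁ * γ₁₂ = -(γ₂₁ * γ₂₂) ∨ γ₁₁ * γ₂₁ = -(γ₁₂ * γ₂₂))
    (A₁ A₂ B₁ B₂ : Matrix (Fin d) (Fin d) ℂ)
    (hA₁ : A₁.IsHermitian) (hA₂ : A₂.IsHermitian) (hB₁ : B₁.IsHermitian) (hB₂ : B₂.IsHermitian)
    (hnA₁ : opNorm A₁ ≤ 1) (hnA₂ : opNorm A₂ ≤ 1) (hnB₁ : opNorm B₁ ≤ 1) (hnB₂ : opNorm B₂ ≤ 1) :
    ‖(γ₁₁ : ℂ) * (ρ * (A₁ ⊗ₖ B₁)).trace + (γ₁₂ : ℂ) * (ρ * (A₁ ⊗ₖ B₂)).trace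
        + (γ₂₁ : ℂ) * (ρ * (A₂ ⊗ₖ B₁)).trace + (γ₂₂ : ℂ) * (ρ * (A₂ ⊗ₖ B₂)).trace‖ ≤ 2 := by
  obtain ⟨⟨-, htrace⟩, ⟨T, hT, -, h₂, h₃⟩ | ⟨S, hS, -, h₁, h₂⟩⟩ := hρ
  · exact norm_chshValue_le_two_of_ptr2_ptr3 hT h₂ h₃ htrace hγ₁₁ hγ₁₂ hγ₂₁ hγ₂₂ hγ hB₁ hB₂
      hnA₁ hnA₂ hnB₁ hnB₂
  · exact norm_chshValue_le_two_of_ptr1_ptr2 hS h₁ h₂ htrace hγ₁₁ hγ₁₂ hγ₂₁ hγ₂₂ hγ hA₁ hA₂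
      hnA₁ hnA₂ hnB₁ hnB₂

/-- a symmetric DSO state satisfies the extended CHSH inequality (40). -/
theorem symmetric_dso_extended_chsh {d : ℕ}
    (ρ : Matrix (Fin d × Fin d) (Fin d × Fin d) ℂ) (hρ : IsDSO ρ)
    (hsym : swapMat d * ρ * swapMat d = ρ)
    (γ₁₁ γ₁₂ γ₂₁ γ₂₂ : ℝ)
    (hγ₁₁ : |γ₁₁| ≤ 1) (hγ₁₂ : |γ₁₂| ≤ 1) (hγ₂₁ : |γ₂₁| ≤ 1) (hγ₂₂ : |γ₂₂| ≤ 1)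
    (hγ : γ₁₁ * γ₁₂ = -(γ₂₁ * γ₂₂) ∨ γ₁₁ * γ₂₁ = -(γ₁₂ * γ₂₂))
    (A₁ A₂ B₁ B₂ : Matrix (Fin d) (Fin d) ℂ)
    (hA₁ : A₁.IsHermitian) (hA₂ : A₂.IsHermitian) (hB₁ : B₁.IsHermitian) (hB₂ : B₂.IsHermitian)
    (hnA₁ : opNorm A₁ ≤ 1) (hnA₂ : opNorm A₂ ≤ 1) (hnB₁ : opNorm B₁ ≤ 1) (hnB₂ : opNorm B₂ ≤ 1) :
    ‖(γ₁₁ : ℂ) * (ρ * (A₁ ⊗ₖ B₁)).trace + (γ₁₂ : ℂ) * (ρ * (A₁ ⊗ₖ B₂)).trace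
        + (γ₂₁ : ℂ) * (ρ * (A₂ ⊗ₖ B₁)).trace + (γ₂₂ : ℂ) * (ρ * (A₂ ⊗ₖ B₂)).trace‖ ≤ 2 :=
  symmetric_dso_extended_chsh_general ρ hρ γ₁₁ γ₁₂ γ₂₁ γ₂₂ hγ₁₁ hγ₁₂ hγ₂₁ hγ₂₂ hγ A₁ A₂ B₁ B₂ hA₁
    hA₂ hB₁ hB₂ hnA₁ hnA₂ hnB₁ hnB₂

end BellPaper
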